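/- arXiv:1310.8025 — 2 statements merged into one kernel-verified Lean document; each statement's English description precedes it below -/
import Mathlib

section
/- For k ≥ 1, λ a positive integer, and m ≥ 0, the order-k Boole polynomials of the second kind satisfy B̂l_m^{(k)}(x|λ) = ∑_{l=0}^{m} s(m,l) (-1)^l (λ^l/2^k) E_l^{(k)}(-x/λ). -/
/-!
Substitute `t = -λ log(1 + s)` into the generating function of the Euler polynomials. Then
`e^{-t} = (1 + s)^λ`, so `(2 / (e^t + 1))^k e^{yt} = 2^k (e^{-t})^k e^{yt} / (1 + e^{-t})^k`
becomes `2^k (1 + s)^{λk} (1 + s)^{-λy} / (1 + (1 + s)^λ)^k`, which is `2^k` times the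
generating function of `B̂l_n^{(k)}(x|λ)` at `x = -λy`. On the other side
`(log(1 + s))^l / l! = ∑_m s(m,l) s^m / m!`, so `∑_l E_l^{(k)}(y) t^l / l!` becomes
`∑_m (∑_l s(m,l) (-λ)^l E_l^{(k)}(y)) s^m / m!`.
-/

open Finset PowerSeries

/-- Stirling numbers of the second kind. -/
def stirling2 : ℕ → ℕ → ℕ
  | 0, 0 => 1
  | 0, _ + 1 => 0
  | _ + 1, 0 => 0
  | n + 1, k + 1 => (k + 1) * stirling2 n (k + 1) + stirling2 n k

/-- Unsigned Stirling numbers of the first kind. -/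
def stirling1 : ℕ → ℕ → ℕ
  | 0, 0 => 1
  | 0, _ + 1 => 0
  | _ + 1, 0 => 0
  | n + 1, k + 1 => n * stirling1 n (k + 1) + stirling1 n k

/-- Signed Stirling numbers of the first kind. -/
def s1 (n l : ℕ) : ℚ := (-1) ^ (n - l) * (stirling1 n l : ℚ)

/-- The exponential generating function `∑ a n * t^n / n!` as a power series over `ℚ`. -/
noncomputable def egf (a : ℕ → ℚ) : PowerSeries ℚ :=
  PowerSeries.mk fun n => a n / (Nat.factorial n : ℚ)

/-- The binomial series `(1+t)^x = ∑ (x)_n t^n / n!` for `x : ℚ`. -/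
noncomputable def onePlusTPow (x : ℚ) : PowerSeries ℚ :=
  egf fun n => ∏ i ∈ Finset.range n, (x - i)

/-- `e^{xt}` as a power series over `ℚ`. -/
noncomputable def expXT (x : ℚ) : PowerSeries ℚ := egf fun n => x ^ n

theorem stirling1_eq_stirlingFirst (n k : ℕ) : stirling1 n k = Nat.stirlingFirst n k := by
  induction n generalizing k with
  | zero => cases k <;> rfl
  | succ n ih => cases k <;> simp [stirling1, Nat.stirlingFirst, ih]

theorem s1_eq_zero_of_lt {n k : ℕ} (h : n < k) : s1 n k = 0 := by
  simp [s1, stirling1_eq_stirlingFirst, Nat.stirlingFirst_eq_zero_of_lt h]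

@[simp]
theorem s1_zero_zero : s1 0 0 = 1 := by
  simp [s1, stirling1]

@[simp]
theorem s1_succ_zero (n : ℕ) : s1 (n + 1) 0 = 0 := by
  simp [s1, stirling1]

theorem s1_succ_succ (n k : ℕ) : s1 (n + 1) (k + 1) = s1 n k - n * s1 n (k + 1) := by
  rcases lt_trichotomy n k with h | rfl | h
  · simp [s1_eq_zero_of_lt h, s1_eq_zero_of_lt (Nat.succ_lt_succ h),
      s1_eq_zero_of_lt (Nat.lt_succ_of_lt h)]
  · simp [s1, stirling1_eq_stirlingFirst, Nat.stirlingFirst_self,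
      Nat.stirlingFirst_eq_zero_of_lt n.lt_succ_self]
  · obtain ⟨d, rfl⟩ := Nat.exists_eq_add_of_lt h
    simp only [s1, stirling1_eq_stirlingFirst, Nat.stirlingFirst_succ_succ,
      show k + d + 1 + 1 - (k + 1) = d + 1 by omega, show k + d + 1 - k = d + 1 by omega,
      show k + d + 1 - (k + 1) = d by omega, pow_succ]
    push_cast
    ring

theorem sum_s1_mul_pow (z : ℚ) (n : ℕ) :
    ∑ l ∈ range (n + 1), s1 n l * z ^ l = ∏ i ∈ range n, (z - i) := by
  induction n with
  | zero => simp
  | succ n ih =>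
    have hshift : ∑ l ∈ range (n + 1), s1 n (l + 1) * z ^ (l + 1) =
        ∑ l ∈ range (n + 1), s1 n l * z ^ l - s1 n 0 := by
      rw [sum_range_succ' (fun l => s1 n l * z ^ l), sum_range_succ,
        s1_eq_zero_of_lt n.lt_succ_self]
      ring
    have hzero : (n : ℚ) * s1 n 0 = 0 := by cases n <;> simp
    rw [sum_range_succ', prod_range_succ, ← ih]
    simp only [s1_succ_succ, sub_mul, sum_sub_distrib, mul_assoc, ← mul_sum, hshift, s1_succ_zero]
    simp only [pow_succ, ← mul_assoc, ← sum_mul]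
    linear_combination hzero

theorem coeff_egf (a : ℕ → ℚ) (n : ℕ) : coeff n (egf a) = a n / n.factorial :=
  coeff_mk _ _

theorem derivative_egf (a : ℕ → ℚ) : d⁄dX ℚ (egf a) = egf fun n => a (n + 1) := by
  ext n
  rw [coeff_derivative, coeff_egf, coeff_egf, Nat.factorial_succ]
  push_cast
  field_simp

theorem X_mul_egf (a : ℕ → ℚ) : X * egf a = egf fun n => n * a (n - 1) := by
  ext n
  cases n with
  | zero => simp [coeff_egf]
  | succ n =>
    rw [coeff_succ_X_mul, coeff_egf, coeff_egf, Nat.factorial_succ]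
    push_cast
    field_simp

theorem one_add_X_mul_derivative_log : (1 + X) * d⁄dX ℚ (log ℚ) = 1 := by
  ext n
  cases n with
  | zero => simp [deriv_log]
  | succ n => simp [deriv_log, add_mul, coeff_succ_X_mul, pow_succ]

theorem one_add_X_mul_derivative_egf_s1 (k : ℕ) :
    (1 + X) * d⁄dX ℚ (egf fun n => s1 n (k + 1)) = egf fun n => s1 n k := by
  rw [add_mul, one_mul, derivative_egf, X_mul_egf]
  ext n
  rw [map_add, coeff_egf, coeff_egf, coeff_egf, ← add_div, s1_succ_succ]
  cases n <;> simp

theorem log_pow_eq_smul_egf_s1 (k : ℕ) :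
    log ℚ ^ k = (k.factorial : ℚ) • egf fun n => s1 n k := by
  induction k with
  | zero =>
    ext n
    cases n <;> simp [coeff_egf]
  | succ k ih =>
    have hunit : (1 + X : ℚ⟦X⟧) ≠ 0 := fun h => by simpa using congrArg constantCoeff h
    refine derivative.ext (mul_left_cancel₀ hunit ?_) ?_
    · rw [Derivation.leibniz_pow, Nat.add_sub_cancel, ih, Derivation.map_smul,
        Nat.factorial_succ]
      simp only [smul_eq_C_mul, smul_eq_mul, ← Nat.cast_smul_eq_nsmul ℚ, Nat.cast_mul, map_mul]
      push_cast
      linear_combination (C ((k : ℚ) + 1) * C (k.factorial : ℚ) * egf fun n => s1 n k) *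
        one_add_X_mul_derivative_log -
        C ((k : ℚ) + 1) * C (k.factorial : ℚ) * one_add_X_mul_derivative_egf_s1 k
    · simp [egf, s1_eq_zero_of_lt]

theorem subst_smul_log_egf (c : ℚ) (a : ℕ → ℚ) :
    (egf a).subst (c • log ℚ) = egf fun n => ∑ l ∈ range (n + 1), s1 n l * c ^ l * a l := by
  ext n
  have hterm (l : ℕ) : coeff l (egf a) • coeff n ((c • log ℚ) ^ l) =
      s1 n l * c ^ l * a l / n.factorial := by
    simp only [smul_pow, log_pow_eq_smul_egf_s1, smul_smul, coeff_smul, coeff_egf, smul_eq_mul]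
    field_simp
  rw [coeff_subst' (HasSubst.log.smul' c), finsum_congr hterm, coeff_egf, sum_div]
  refine finsum_eq_sum_of_support_subset _ fun l hl => mem_range.2 ?_
  by_contra h
  exact hl (by simp [s1_eq_zero_of_lt (by omega : n < l)])

theorem onePlusTPow_eq_binomialSeries (x : ℚ) :
    onePlusTPow x = PowerSeries.binomialSeries ℚ x := by
  ext n
  rw [onePlusTPow, egf, coeff_mk, binomialSeries_coeff, Ring.choose_eq_smul, smul_eq_mul,
    ← Polynomial.aeval_eq_smeval, ← descPochhammer_eval_eq_prod_range]
  simp [div_eq_inv_mul, Polynomial.aeval_def, Polynomial.eval₂_eq_eval_map, descPochhammer_map]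

theorem expXT_eq_rescale_exp (z : ℚ) : expXT z = rescale z (exp ℚ) := by
  ext n
  simp [expXT, egf, coeff_rescale, coeff_exp, div_eq_mul_inv]

theorem subst_smul_log_rescale_exp (c z : ℚ) :
    (rescale z (exp ℚ)).subst (c • log ℚ) = PowerSeries.binomialSeries ℚ (c * z) := by
  rw [← expXT_eq_rescale_exp, ← onePlusTPow_eq_binomialSeries, expXT, subst_smul_log_egf,
    onePlusTPow]
  congr 1 with n
  rw [← sum_s1_mul_pow]
  simp only [mul_pow, mul_assoc]

theorem subst_neg_smul_log_of_euler_egf (L k : ℕ) (a : ℕ → ℚ) (y : ℚ)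
    (h : egf a * (exp ℚ + 1) ^ k = 2 ^ k * expXT y) :
    (egf fun n => ∑ l ∈ range (n + 1), s1 n l * (-L : ℚ) ^ l * a l) * (1 + (1 + X) ^ L) ^ k =
      2 ^ k * ((1 + X) ^ (L * k) * onePlusTPow (-L * y)) := by
  set σ : ℚ⟦X⟧ →ₐ[ℚ] ℚ⟦X⟧ := substAlgHom (HasSubst.log.smul' (-L : ℚ))
  have hσ_exp (z : ℚ) : σ (rescale z (exp ℚ)) = PowerSeries.binomialSeries ℚ (-L * z) := by
    rw [coe_substAlgHom, subst_smul_log_rescale_exp]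
  have hinv : exp ℚ * rescale (-1) (exp ℚ) = 1 := exp_mul_exp_neg_eq_one
  have h_neg : egf a * (1 + rescale (-1) (exp ℚ)) ^ k =
      2 ^ k * (rescale (-1) (exp ℚ) ^ k * rescale y (exp ℚ)) := by
    calc egf a * (1 + rescale (-1) (exp ℚ)) ^ k
        = egf a * (exp ℚ + 1) ^ k * rescale (-1) (exp ℚ) ^ k := by
          rw [mul_assoc, ← mul_pow, add_mul, hinv, one_mul, add_comm]
      _ = _ := by rw [h, expXT_eq_rescale_exp, mul_assoc, mul_comm (rescale y _)]
  have h_subst := congrArg σ h_neg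
  simp only [map_mul, map_pow, map_add, map_one, map_ofNat, hσ_exp] at h_subst
  rwa [coe_substAlgHom, subst_smul_log_egf, neg_mul_neg, mul_one, binomialSeries_nat, ← pow_mul,
    ← onePlusTPow_eq_binomialSeries] at h_subst

theorem boole2nd_order_k_eq_sum_stirling1_euler_general (k L : ℕ) (hL : 0 < L) (x : ℚ)
    (Bhk : ℕ → ℚ) (Ek : ℕ → ℚ → ℚ)
    (hBhk : egf Bhk * (1 + (1 + PowerSeries.X) ^ L) ^ k =
      (1 + PowerSeries.X) ^ (L * k) * onePlusTPow x)
    (hEk : ∀ y : ℚ, egf (fun m => Ek m y) * (PowerSeries.exp ℚ + 1) ^ k = 2 ^ k * expXT y)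
    (m : ℕ) :
    Bhk m = ∑ l ∈ Finset.range (m + 1),
      s1 m l * (-1) ^ l * ((L : ℚ) ^ l / 2 ^ k) * Ek l (-x / L) := by
  have hx : -(L : ℚ) * (-x / L) = x := by
    have : (L : ℚ) ≠ 0 := by positivity
    field_simp
  have h := subst_neg_smul_log_of_euler_egf L k _ _ (hEk (-x / L))
  rw [hx, ← hBhk, ← map_ofNat C 2, ← map_pow, ← mul_assoc] at h
  have hP : (1 + (1 + X) ^ L : ℚ⟦X⟧) ^ k ≠ 0 :=
    pow_ne_zero _ fun h0 => by simpa using congrArg constantCoeff h0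
  have hcoeff := congrArg (coeff m) (mul_right_cancel₀ hP h)
  rw [coeff_egf, coeff_C_mul, coeff_egf, mul_div_assoc', div_left_inj' (by positivity)] at hcoeff
  rw [← mul_right_inj' (by positivity : (2 : ℚ) ^ k ≠ 0), ← hcoeff, mul_sum]
  refine sum_congr rfl fun l _ => ?_
  rw [neg_pow]
  field_simp

theorem boole2nd_order_k_eq_sum_stirling1_euler (k L : ℕ) (hk : 1 ≤ k) (hL : 0 < L) (x : ℚ)
    (Bhk : ℕ → ℚ) (Ek : ℕ → ℚ → ℚ)
    (hBhk : egf Bhk * (1 + (1 + PowerSeries.X) ^ L) ^ k =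
      (1 + PowerSeries.X) ^ (L * k) * onePlusTPow x)
    (hEk : ∀ y : ℚ, egf (fun m => Ek m y) * (PowerSeries.exp ℚ + 1) ^ k = 2 ^ k * expXT y)
    (m : ℕ) :
    Bhk m = ∑ l ∈ Finset.range (m + 1),
      s1 m l * (-1) ^ l * ((L : ℚ) ^ l / 2 ^ k) * Ek l (-x / L) :=
  boole2nd_order_k_eq_sum_stirling1_euler_general k L hL x Bhk Ek hBhk hEk m
end

section
/- As formal power series in ℚ[x][[t]], the substitution of e^t - 1 for t in the Boole generating function ∑_{n≥0} 2·Bl_n(x|λ) t^n/n! = 2(1+t)^x/(1+(1+t)^λ) yields the Euler-type generating function (2/(e^{λt}+1)) e^{xt} = ∑_{m≥0} λ^m E_m(x/λ) t^m/m!, for λ a positive integer. -/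
open Finset PowerSeries

/-
Substituting `t ↦ e^t - 1` is a ring homomorphism of power series, so it may be applied to the
relation `B(t) (1 + (1 + t)^L) = (1 + t)^x` defining the Boole polynomials. It sends `1 + t` to
`e^t`, hence `(1 + t)^L` to `e^{Lt}`; and since `(e^t - 1)^n / n! = ∑_m S(m, n) t^m / m!`, it
sends the binomial series `∑_n (x)_n t^n / n!` to `∑_m (∑_n (x)_n S(m, n)) t^m / m! = e^{xt}`.
Rescaling `t ↦ L t` in the Euler generating function at `x / L` gives a second solution `f` of
`f (e^{Lt} + 1) = 2 e^{xt}`, and `e^{Lt} + 1` can be cancelled since its constant term is `2`.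
-/

theorem stirling2_eq_stirlingSecond : ∀ m n, stirling2 m n = Nat.stirlingSecond m n
  | 0, 0 | 0, _ + 1 | _ + 1, 0 => rfl
  | m + 1, n + 1 => by
    rw [stirling2, Nat.stirlingSecond_succ_succ, stirling2_eq_stirlingSecond m,
      stirling2_eq_stirlingSecond m]

theorem sum_prod_sub_mul_stirlingSecond {R : Type*} [CommRing R] (x : R) (m : ℕ) :
    ∑ n ∈ range (m + 1), (∏ i ∈ range n, (x - i)) * (Nat.stirlingSecond m n : R) =
      x ^ m := by
  induction m with
  | zero => simp
  | succ m ih =>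
    set P : ℕ → R := fun n => ∏ i ∈ range n, (x - i) with hP
    have hshift :
        ∑ n ∈ range (m + 1), ((n + 1 : ℕ) : R) * P (n + 1) * Nat.stirlingSecond m (n + 1)
          = ∑ n ∈ range (m + 1), (n : R) * P n * Nat.stirlingSecond m n := by
      have h := sum_range_succ' (fun n => (n : R) * P n * Nat.stirlingSecond m n) (m + 1)
      rw [sum_range_succ, Nat.stirlingSecond_eq_zero_of_lt (Nat.lt_succ_self m)] at h
      simpa using h.symm
    calc ∑ n ∈ range (m + 1 + 1), P n * (Nat.stirlingSecond (m + 1) n : R)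
        = ∑ n ∈ range (m + 1), (P (n + 1) * Nat.stirlingSecond m n
            + ((n + 1 : ℕ) : R) * P (n + 1) * Nat.stirlingSecond m (n + 1)) := by
          rw [sum_range_succ']
          simp only [Nat.stirlingSecond_succ_succ, Nat.stirlingSecond_succ_zero]
          push_cast
          simp only [mul_zero, add_zero]
          exact sum_congr rfl fun n _ => by ring
      _ = ∑ n ∈ range (m + 1), (P (n + 1) + n * P n) * Nat.stirlingSecond m n := by
          rw [sum_add_distrib, hshift, ← sum_add_distrib]
          exact sum_congr rfl fun n _ => by ring
      _ = x ^ (m + 1) := by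
          rw [pow_succ', ← ih, mul_sum]
          refine sum_congr rfl fun n _ => ?_
          simp only [hP, prod_range_succ]
          ring

theorem coeff_subst_of_constantCoeff_eq_zero {R : Type*} [CommRing R] {a : R⟦X⟧}
    (ha : constantCoeff a = 0) (f : R⟦X⟧) (m : ℕ) :
    coeff m (f.subst a) = ∑ n ∈ range (m + 1), coeff n f * coeff m (a ^ n) := by
  rw [coeff_subst' (HasSubst.of_constantCoeff_zero' ha)]
  refine finsum_eq_finsetSum_of_support_subset _ fun n hn => ?_
  by_contra hnm
  have hXn : (X : R⟦X⟧) ^ n ∣ a ^ n := pow_dvd_pow_of_dvd (X_dvd_iff.mpr ha) n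
  apply hn
  simp only [X_pow_dvd_iff.mp hXn m (by simpa using hnm), smul_zero]

theorem constantCoeff_exp_sub_one : constantCoeff (exp ℚ - 1) = 0 := by
  simp

theorem hasSubst_exp_sub_one : HasSubst (exp ℚ - 1) :=
  HasSubst.of_constantCoeff_zero' constantCoeff_exp_sub_one

theorem derivative_exp_sub_one_pow_succ (n : ℕ) :
    d⁄dX ℚ ((exp ℚ - 1) ^ (n + 1)) =
      ((n : ℚ) + 1) • ((exp ℚ - 1) ^ (n + 1) + (exp ℚ - 1) ^ n) := by
  rw [Derivation.leibniz_pow, map_sub, derivative_exp, Derivation.map_one_eq_zero, sub_zero,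
    add_tsub_cancel_right, smul_eq_mul, ← Nat.cast_smul_eq_nsmul ℚ, Nat.cast_succ]
  congr 1
  ring

theorem coeff_exp_sub_one_pow (m n : ℕ) :
    coeff m ((exp ℚ - 1) ^ n) = (n.factorial : ℚ) * Nat.stirlingSecond m n / m.factorial := by
  induction m generalizing n with
  | zero =>
    cases n with
    | zero => simp
    | succ n => simp [coeff_zero_eq_constantCoeff]
  | succ m ih =>
    cases n with
    | zero => simp
    | succ n =>
      have h := congrArg (coeff m) (derivative_exp_sub_one_pow_succ n)
      rw [coeff_derivative, coeff_smul, smul_eq_mul, map_add, ih, ih, Nat.factorial_succ] at h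
      rw [Nat.stirlingSecond_succ_succ, Nat.factorial_succ, Nat.factorial_succ]
      push_cast at h ⊢
      field_simp at h ⊢
      exact h

theorem egf_const_mul (c : ℚ) (a : ℕ → ℚ) : egf (fun n => c * a n) = C c * egf a := by
  ext n
  simp only [egf, coeff_C_mul, coeff_mk, mul_div_assoc]

theorem rescale_egf (c : ℚ) (a : ℕ → ℚ) : rescale c (egf a) = egf fun n => c ^ n * a n := by
  ext n
  simp only [egf, coeff_rescale, coeff_mk, mul_div_assoc]

theorem rescale_expXT (c y : ℚ) : rescale c (expXT y) = expXT (c * y) := by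
  simp only [expXT, rescale_egf, mul_pow]

theorem egf_subst_exp_sub_one (a : ℕ → ℚ) :
    (egf a).subst (exp ℚ - 1) =
      egf fun m => ∑ n ∈ range (m + 1), a n * (Nat.stirlingSecond m n : ℚ) := by
  ext m
  simp only [coeff_subst_of_constantCoeff_eq_zero constantCoeff_exp_sub_one, egf, coeff_mk,
    sum_div]
  refine sum_congr rfl fun n _ => ?_
  rw [coeff_exp_sub_one_pow]
  field_simp

theorem onePlusTPow_subst_exp_sub_one (x : ℚ) :
    (onePlusTPow x).subst (exp ℚ - 1) = expXT x := by
  simp only [onePlusTPow, egf_subst_exp_sub_one, sum_prod_sub_mul_stirlingSecond, expXT]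

theorem one_add_X_pow_subst_exp_sub_one (L : ℕ) :
    ((1 + X) ^ L : ℚ⟦X⟧).subst (exp ℚ - 1) = rescale (L : ℚ) (exp ℚ) := by
  rw [← coe_substAlgHom hasSubst_exp_sub_one, map_pow, map_add, map_one, coe_substAlgHom,
    subst_X hasSubst_exp_sub_one, add_sub_cancel, exp_pow_eq_rescale_exp]

theorem boole_subst_exp_sub_one (L : ℕ) (hL : 0 < L) (x : ℚ) (Bl : ℕ → ℚ) (E : ℕ → ℚ → ℚ)
    (hBl : egf Bl * (1 + (1 + PowerSeries.X) ^ L) = onePlusTPow x)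
    (hE : ∀ y : ℚ, egf (fun m => E m y) * (PowerSeries.exp ℚ + 1) = 2 * expXT y) :
    egf (fun m => ∑ n ∈ Finset.range (m + 1), 2 * Bl n * (stirling2 m n : ℚ)) *
        (PowerSeries.rescale (L : ℚ) (PowerSeries.exp ℚ) + 1) = 2 * expXT x ∧
      egf (fun m => ∑ n ∈ Finset.range (m + 1), 2 * Bl n * (stirling2 m n : ℚ)) =
        egf (fun m => (L : ℚ) ^ m * E m (x / L)) := by
  have hBoole : egf (fun m => ∑ n ∈ range (m + 1), 2 * Bl n * (stirling2 m n : ℚ)) *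
      (rescale (L : ℚ) (exp ℚ) + 1) = 2 * expXT x := by
    have h := congrArg (substAlgHom hasSubst_exp_sub_one) hBl
    rw [map_mul, map_add, map_one, coe_substAlgHom, egf_subst_exp_sub_one,
      one_add_X_pow_subst_exp_sub_one, onePlusTPow_subst_exp_sub_one] at h
    simp_rw [stirling2_eq_stirlingSecond, mul_assoc (2 : ℚ), ← mul_sum, egf_const_mul,
      map_ofNat, ← h]
    ring
  have hEuler : egf (fun m => (L : ℚ) ^ m * E m (x / L)) *
      (rescale (L : ℚ) (exp ℚ) + 1) = 2 * expXT x := by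
    have h := congrArg (rescale (L : ℚ)) (hE (x / L))
    rwa [map_mul, map_add, map_one, map_mul, map_ofNat, rescale_egf, rescale_expXT,
      mul_div_cancel₀ _ (by exact_mod_cast hL.ne')] at h
  have hne : rescale (L : ℚ) (exp ℚ) + 1 ≠ 0 := fun h => by
    have h0 := congrArg (coeff 0) h
    rw [map_add, coeff_rescale, coeff_exp] at h0
    norm_num at h0
  exact ⟨hBoole, mul_right_cancel₀ hne (hBoole.trans hEuler.symm)⟩
end
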